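/- Let p, P : ℂ → ℂ be polynomials with p and P not identically zero, and let α be a nonconstant polynomial. Then it is impossible that exp(2α(z)) = c * P(z) / p(z)^2 for all z with p(z) ≠ 0, for any constant c ≠ 0. -/

import Mathlib

/-!
Differentiating `exp β · Q = R` (valid off finitely many points) gives
`exp β · (Q β' + Q') = R'`; multiplying by `Q` and substituting back eliminates the exponential
and leaves the polynomial identity `R (Q β' + Q') = R' Q`. When `β' ≠ 0` the left side has degree
at least `deg R + deg Q`, while the right side has degree at most `deg R - 1 + deg Q`.
-/

open Polynomial Filter

namespace Polynomial

theorem eq_of_eventually_eval_eq {R : Type*} [CommRing R] [IsDomain R] [Infinite R]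
    {p q : R[X]} (h : ∀ᶠ x in cofinite, p.eval x = q.eval x) : p = q :=
  eq_of_infinite_eval_eq p q (frequently_cofinite_iff_infinite.mp h.frequently)

theorem degree_le_degree_mul_add_derivative {R : Type*} [Semiring R] [NoZeroDivisors R]
    {γ : R[X]} (Q : R[X]) (hγ : γ ≠ 0) : Q.degree ≤ (Q * γ + derivative Q).degree := by
  rcases eq_or_ne Q 0 with rfl | hQ
  · simp
  rw [degree_add_eq_left_of_degree_lt ((degree_derivative_lt hQ).trans_le
    (degree_le_mul_left Q hγ))]
  exact degree_le_mul_left Q hγ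

theorem mul_derivative_identity_of_eventually_cexp_mul_eval_eq {β Q R : ℂ[X]}
    (h : ∀ᶠ z in cofinite, Complex.exp (β.eval z) * Q.eval z = R.eval z) :
    R * (Q * derivative β + derivative Q) = derivative R * Q := by
  have hopen : IsOpen {z | Complex.exp (β.eval z) * Q.eval z = R.eval z} := by
    simpa using (mem_cofinite.mp h).isClosed.isOpen_compl
  apply eq_of_eventually_eval_eq
  filter_upwards [h] with z hz
  have hderiv : HasDerivAt (fun w => Complex.exp (β.eval w) * Q.eval w)
      (Complex.exp (β.eval z) * (derivative β).eval z * Q.eval z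
        + Complex.exp (β.eval z) * (derivative Q).eval z) z :=
    ((β.hasDerivAt z).cexp).mul (Q.hasDerivAt z)
  have hR' : Complex.exp (β.eval z) * (derivative β).eval z * Q.eval z
      + Complex.exp (β.eval z) * (derivative Q).eval z = (derivative R).eval z :=
    (hderiv.congr_of_eventuallyEq ((hopen.eventually_mem hz).mono fun _ hw => hw.symm)).unique
      (R.hasDerivAt z)
  simp only [eval_mul, eval_add]
  linear_combination Q.eval z * hR'
    - (Q.eval z * (derivative β).eval z + (derivative Q).eval z) * hz

theorem not_eventually_cexp_mul_eval_eq {β Q R : ℂ[X]} (hQ : Q ≠ 0) (hβ : derivative β ≠ 0) :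
    ¬ ∀ᶠ z in cofinite, Complex.exp (β.eval z) * Q.eval z = R.eval z := by
  intro h
  have hid := mul_derivative_identity_of_eventually_cexp_mul_eval_eq h
  set S := Q * derivative β + derivative Q
  have hQS : Q.degree ≤ S.degree := degree_le_degree_mul_add_derivative Q hβ
  have hS : S ≠ 0 := ne_zero_of_degree_ge_degree hQS hQ
  have hR : R ≠ 0 := by
    rintro rfl
    refine hQ (eq_of_eventually_eval_eq ?_)
    filter_upwards [h] with z hz
    simpa [Complex.exp_ne_zero] using hz
  have hR' : derivative R ≠ 0 := by
    intro h0
    rw [h0, zero_mul] at hid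
    exact mul_ne_zero hR hS hid
  have hdeg := congrArg natDegree hid
  rw [natDegree_mul hR hS, natDegree_mul hR' hQ] at hdeg
  have := natDegree_le_natDegree hQS
  have := natDegree_derivative_lt (derivative_ne_zero.mp hR')
  omega

end Polynomial

theorem stmt5_general (p P α : Polynomial ℂ) (hp : p ≠ 0)
    (hα : 1 ≤ α.natDegree) (c : ℂ) :
    ¬ (∀ z : ℂ, p.eval z ≠ 0 →
        Complex.exp (2 * α.eval z) * (p.eval z) ^ 2 = c * P.eval z) := by
  intro h
  refine not_eventually_cexp_mul_eval_eq (β := C 2 * α) (Q := p ^ 2) (R := C c * P)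
    (pow_ne_zero 2 hp) ?_ ?_
  · rw [derivative_C_mul]
    exact mul_ne_zero (by simp) (derivative_ne_zero.mpr (by omega))
  · have hroots : ∀ᶠ z in cofinite, p.eval z ≠ 0 :=
      eventually_cofinite.mpr (by simpa using finite_setOfPred_isRoot hp)
    filter_upwards [hroots] with z hz
    simpa using h z hz

theorem stmt5 (p P α : Polynomial ℂ) (hp : p ≠ 0) (hP : P ≠ 0)
    (hα : 1 ≤ α.natDegree) (c : ℂ) (hc : c ≠ 0) :
    ¬ (∀ z : ℂ, p.eval z ≠ 0 →
        Complex.exp (2 * α.eval z) * (p.eval z) ^ 2 = c * P.eval z) :=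
  stmt5_general p P α hp hα c
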